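/- Let H be a full-rank n×n real matrix, D = diag(d₁,…,dₙ) with dᵢ > 0, and T an n×n upper unitriangular integer matrix. Let s be uniform on [-1/2,1/2)ⁿ with independent coordinates and set x̄ = H⁻¹ D T · Mod(T⁻¹ s) (componentwise Mod). Then E[‖x̄‖²] = (1/12)·tr(Tᵀ D (H Hᵀ)⁻¹ D T) ≥ (n/12)·det((H Hᵀ)⁻¹)^(1/n)·(∏ᵢ dᵢ²)^(1/n). -/

import Mathlib

open MeasureTheory Matrix

/-- `modHalf t` is the representative of `t` modulo `1` in `[-1/2, 1/2)`. -/
noncomputable def modHalf (t : ℝ) : ℝ := t - round t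

section Aux
open Set

lemma modHalf_mem (t : ℝ) : modHalf t ∈ Set.Ico (-(1/2) : ℝ) (1/2) := by
  have h := round_eq t
  constructor
  · have := Int.floor_le (t + 1/2); simp only [modHalf, h]; linarith
  · have := Int.lt_floor_add_one (t + 1/2)
    simp only [modHalf, h]; push_cast at this ⊢; linarith

lemma modHalf_eq_self {t : ℝ} (h : t ∈ Set.Ico (-(1/2) : ℝ) (1/2)) : modHalf t = t := by
  have : round t = 0 := round_eq_zero_iff.2 h
  simp [modHalf, this]

lemma modHalf_add_int (x : ℝ) (m : ℤ) : modHalf (x + m) = modHalf x := by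
  simp only [modHalf, round_add_intCast, Int.cast_add]; ring

lemma measurable_modHalf : Measurable modHalf := by
  have h1 : Monotone (fun x : ℝ => ((⌊x + 1/2⌋ : ℤ) : ℝ)) := by
    intro a b hab
    simp only []
    exact_mod_cast Int.floor_mono (show a + 1/2 ≤ b + 1/2 by linarith)
  have : Measurable fun x : ℝ => ((round x : ℤ) : ℝ) := by
    simp_rw [round_eq]; exact h1.measurable
  exact measurable_id.sub this

lemma abs_modHalf_le (t : ℝ) : |modHalf t| ≤ 1/2 := by
  have h := modHalf_mem t
  rw [abs_le]; exact ⟨by linarith [h.1], le_of_lt h.2⟩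

lemma Ico_disj (a b c : ℝ) : Disjoint (Set.Ico a b) (Set.Ico b c) := by
  rw [Set.disjoint_left]
  rintro x ⟨_, h2⟩ ⟨h3, _⟩
  exact absurd h3 (not_le.2 h2)

lemma integrableOn_of_bdd {f : ℝ → ℝ} (hf : Measurable f) (C : ℝ) (h : ∀ x, |f x| ≤ C)
    {s : Set ℝ} (hfin : volume s < ⊤) : IntegrableOn f s volume :=
  Integrable.mono' (integrableOn_const hfin.ne) hf.aestronglyMeasurable.restrict
    (Filter.Eventually.of_forall fun x => by simpa [Real.norm_eq_abs] using h x)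

/-- Change of variables: integrating `φ ∘ modHalf ∘ (· + t)` over `[-1/2,1/2)`
equals integrating `φ` over the same interval. -/
lemma integral_modHalf_comp (φ : ℝ → ℝ) (hφ : Measurable φ) (C : ℝ) (hC : ∀ x, |φ x| ≤ C)
    (t : ℝ) :
    ∫ r in Set.Ico (-(1/2) : ℝ) (1/2), φ (modHalf (r + t)) = ∫ r in (-(1/2) : ℝ)..(1/2), φ r := by
  set c := modHalf t with hc
  have hmem : c ∈ Set.Ico (-(1/2) : ℝ) (1/2) := modHalf_mem t
  have hred : ∀ r : ℝ, modHalf (r + t) = modHalf (r + c) := by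
    intro r
    have : r + t = (r + c) + (round t : ℤ) := by simp [hc, modHalf]; ring
    rw [this, modHalf_add_int]
  simp_rw [hred]
  have hmeas : Measurable fun r => φ (modHalf (r + c)) :=
    (hφ.comp (measurable_modHalf.comp (measurable_id.add_const c)))
  have hint : ∀ s : Set ℝ, volume s < ⊤ → IntegrableOn (fun r => φ (modHalf (r + c))) s volume :=
    fun s hs => integrableOn_of_bdd hmeas C (fun x => hC _) hs
  have huIoc : ∀ a b : ℝ, volume (Set.uIoc a b) < ⊤ := fun a b => by
    rw [Set.uIoc]; exact measure_Ioc_lt_top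
  have hii : ∀ a b : ℝ, IntervalIntegrable φ volume a b := fun a b =>
    intervalIntegrable_iff.2 (integrableOn_of_bdd hφ C hC (huIoc _ _))
  rcases le_or_gt 0 c with h0 | h0
  · -- c ≥ 0, split at m = 1/2 - c
    have h1 : (-(1/2) : ℝ) ≤ 1/2 - c := by linarith [hmem.2]
    have h2 : (1/2 - c : ℝ) ≤ 1/2 := by linarith
    rw [← Set.Ico_union_Ico_eq_Ico h1 h2,
      setIntegral_union (Ico_disj _ _ _) measurableSet_Ico
        (hint _ measure_Ico_lt_top) (hint _ measure_Ico_lt_top)]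
    have e1 : ∫ r in Set.Ico (-(1/2) : ℝ) (1/2 - c), φ (modHalf (r + c))
        = ∫ r in Set.Ico (-(1/2) : ℝ) (1/2 - c), φ (r + c) := by
      refine setIntegral_congr_fun measurableSet_Ico fun r hr => ?_
      rw [modHalf_eq_self ⟨by linarith [hr.1], by linarith [hr.2]⟩]
    have e2 : ∫ r in Set.Ico (1/2 - c : ℝ) (1/2), φ (modHalf (r + c))
        = ∫ r in Set.Ico (1/2 - c : ℝ) (1/2), φ (r + c - 1) := by
      refine setIntegral_congr_fun measurableSet_Ico fun r hr => ?_
      have h3 : modHalf (r + c) = r + c - 1 :=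
        calc modHalf (r + c) = modHalf ((r + c - 1) + ((1 : ℤ) : ℝ)) := by norm_num
        _ = modHalf (r + c - 1) := modHalf_add_int _ _
        _ = r + c - 1 := modHalf_eq_self ⟨by linarith [hr.1], by linarith [hr.2]⟩
      rw [h3]
    rw [e1, e2, integral_Ico_eq_integral_Ioo, integral_Ico_eq_integral_Ioo,
      ← integral_Ioc_eq_integral_Ioo, ← integral_Ioc_eq_integral_Ioo,
      ← intervalIntegral.integral_of_le h1, ← intervalIntegral.integral_of_le h2]
    have g1 : (∫ r in (-(1/2) : ℝ)..(1/2 - c), φ (r + c)) = ∫ r in (-(1/2) + c)..(1/2 : ℝ), φ r := by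
      rw [intervalIntegral.integral_comp_add_right]; norm_num
    have g2 : (∫ r in (1/2 - c : ℝ)..(1/2), φ (r + c - 1)) = ∫ r in (-(1/2) : ℝ)..(-(1/2) + c), φ r := by
      have h4 : ∀ r : ℝ, φ (r + c - 1) = φ (r + (c - 1)) := by intro r; ring_nf
      simp_rw [h4]
      rw [intervalIntegral.integral_comp_add_right]
      congr 1 <;> ring
    rw [g1, g2, add_comm]
    exact intervalIntegral.integral_add_adjacent_intervals (hii _ _) (hii _ _)
  · -- c < 0, split at m = -1/2 - c
    have h1 : (-(1/2) : ℝ) ≤ -(1/2) - c := by linarith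
    have h2 : (-(1/2) - c : ℝ) ≤ 1/2 := by linarith [hmem.1]
    rw [← Set.Ico_union_Ico_eq_Ico h1 h2,
      setIntegral_union (Ico_disj _ _ _) measurableSet_Ico
        (hint _ measure_Ico_lt_top) (hint _ measure_Ico_lt_top)]
    have e1 : ∫ r in Set.Ico (-(1/2) : ℝ) (-(1/2) - c), φ (modHalf (r + c))
        = ∫ r in Set.Ico (-(1/2) : ℝ) (-(1/2) - c), φ (r + c + 1) := by
      refine setIntegral_congr_fun measurableSet_Ico fun r hr => ?_
      have h3 : modHalf (r + c) = r + c + 1 :=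
        calc modHalf (r + c) = modHalf ((r + c + 1) + ((-1 : ℤ) : ℝ)) := by norm_num
        _ = modHalf (r + c + 1) := modHalf_add_int _ _
        _ = r + c + 1 := modHalf_eq_self ⟨by linarith [hr.1, hmem.1], by linarith [hr.2]⟩
      rw [h3]
    have e2 : ∫ r in Set.Ico (-(1/2) - c : ℝ) (1/2), φ (modHalf (r + c))
        = ∫ r in Set.Ico (-(1/2) - c : ℝ) (1/2), φ (r + c) := by
      refine setIntegral_congr_fun measurableSet_Ico fun r hr => ?_
      rw [modHalf_eq_self ⟨by linarith [hr.1], by linarith [hr.2]⟩]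
    rw [e1, e2, integral_Ico_eq_integral_Ioo, integral_Ico_eq_integral_Ioo,
      ← integral_Ioc_eq_integral_Ioo, ← integral_Ioc_eq_integral_Ioo,
      ← intervalIntegral.integral_of_le h1, ← intervalIntegral.integral_of_le h2]
    have g1 : (∫ r in (-(1/2) : ℝ)..(-(1/2) - c), φ (r + c + 1)) = ∫ r in (1/2 + c : ℝ)..(1/2), φ r := by
      have h4 : ∀ r : ℝ, φ (r + c + 1) = φ (r + (c + 1)) := by intro r; ring_nf
      simp_rw [h4]
      rw [intervalIntegral.integral_comp_add_right]
      congr 1 <;> ring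
    have g2 : (∫ r in (-(1/2) - c : ℝ)..(1/2), φ (r + c)) = ∫ r in (-(1/2) : ℝ)..(1/2 + c), φ r := by
      rw [intervalIntegral.integral_comp_add_right]
      congr 1 <;> ring
    rw [g1, g2, add_comm]
    exact intervalIntegral.integral_add_adjacent_intervals (hii _ _) (hii _ _)

noncomputable def trunc (x : ℝ) : ℝ := min (max x (-(1/2))) (1/2)

lemma trunc_eq' {x : ℝ} (h : x ∈ Set.Icc (-(1/2) : ℝ) (1/2)) : trunc x = x := by
  rw [trunc, max_eq_left h.1, min_eq_left h.2]

lemma trunc_eq {x : ℝ} (h : x ∈ Set.Ico (-(1/2) : ℝ) (1/2)) : trunc x = x :=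
  trunc_eq' ⟨h.1, h.2.le⟩

lemma measurable_trunc : Measurable trunc :=
  (measurable_id.max measurable_const).min measurable_const

lemma abs_trunc_le (x : ℝ) : |trunc x| ≤ 1/2 := by
  rw [abs_le, trunc]
  constructor
  · exact le_min (le_max_right _ _) (by norm_num)
  · exact min_le_right _ _

lemma integral_modHalf_eq_zero (t : ℝ) :
    ∫ r in Set.Ico (-(1/2) : ℝ) (1/2), modHalf (r + t) = 0 := by
  have key := integral_modHalf_comp trunc measurable_trunc (1/2) abs_trunc_le t
  have h1 : ∀ r : ℝ, trunc (modHalf (r + t)) = modHalf (r + t) := fun r => trunc_eq (modHalf_mem _)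
  simp_rw [h1] at key
  rw [key, intervalIntegral.integral_congr (g := fun x => x)
    (fun x hx => trunc_eq' (by rwa [Set.uIcc_of_le (by norm_num)] at hx)), integral_id]
  norm_num

lemma integral_modHalf_sq (t : ℝ) :
    ∫ r in Set.Ico (-(1/2) : ℝ) (1/2), (modHalf (r + t)) ^ 2 = 1/12 := by
  have key := integral_modHalf_comp (fun x => (trunc x) ^ 2)
    (measurable_trunc.pow_const 2) (1/4)
    (fun x => by
      show |trunc x ^ 2| ≤ 1/4
      rw [abs_of_nonneg (sq_nonneg _)]
      nlinarith [abs_trunc_le x, sq_abs (trunc x), abs_nonneg (trunc x)]) t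
  have h1 : ∀ r : ℝ, (trunc (modHalf (r + t))) ^ 2 = (modHalf (r + t)) ^ 2 := fun r => by
    rw [trunc_eq (modHalf_mem _)]
  simp_rw [h1] at key
  rw [key, intervalIntegral.integral_congr (g := fun x => x ^ 2)
    (fun x hx => by
      rw [trunc_eq' (by rwa [Set.uIcc_of_le (by norm_num)] at hx)]), integral_pow]
  norm_num

noncomputable def mu0 : Measure ℝ := volume.restrict (Set.Ico (-(1/2) : ℝ) (1/2))

instance : IsProbabilityMeasure mu0 := by
  constructor
  rw [mu0, Measure.restrict_apply MeasurableSet.univ, Set.univ_inter, Real.volume_Ico]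
  norm_num

lemma integrable_of_bdd {α : Type*} [MeasurableSpace α] (μ : Measure α) [IsFiniteMeasure μ]
    {f : α → ℝ} (hf : Measurable f) (C : ℝ) (h : ∀ x, |f x| ≤ C) : Integrable f μ :=
  Integrable.mono' (integrable_const C) hf.aestronglyMeasurable
    (Filter.Eventually.of_forall fun x => by simpa [Real.norm_eq_abs] using h x)

/-- Cross term: integral of `modHalf (x j + t x) * g x` vanishes when `t` and `g`
do not depend on the `j`-th coordinate. -/
lemma pi_cross {m : ℕ} (j : Fin (m + 1)) (t g : (Fin (m + 1) → ℝ) → ℝ)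
    (ht : Measurable t) (hg : Measurable g) (Cg : ℝ) (hgb : ∀ x, |g x| ≤ Cg)
    (htj : ∀ (r : ℝ) y, t (j.insertNth r y) = t (j.insertNth 0 y))
    (hgj : ∀ (r : ℝ) y, g (j.insertNth r y) = g (j.insertNth 0 y)) :
    ∫ x, modHalf (x j + t x) * g x ∂(Measure.pi fun _ : Fin (m + 1) => mu0) = 0 := by
  set π : Measure (Fin (m + 1) → ℝ) := Measure.pi fun _ => mu0 with hπ
  set π' : Measure (Fin m → ℝ) := Measure.pi fun _ => mu0 with hπ'
  set F : (Fin (m + 1) → ℝ) → ℝ := fun x => modHalf (x j + t x) * g x with hF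
  have hFmeas : Measurable F :=
    (measurable_modHalf.comp ((measurable_pi_apply j).add ht)).mul hg
  have hFbdd : ∀ x, |F x| ≤ (1/2) * |Cg| := by
    intro x
    rw [hF, abs_mul]
    exact mul_le_mul (abs_modHalf_le _) ((hgb x).trans (le_abs_self _)) (abs_nonneg _)
      (by norm_num)
  set e := MeasurableEquiv.piFinSuccAbove (fun _ : Fin (m + 1) => ℝ) j with he
  have mp := measurePreserving_piFinSuccAbove (fun _ : Fin (m + 1) => mu0) j
  have h1 : ∫ x, F x ∂π = ∫ z, F (e.symm z) ∂(mu0.prod π') := by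
    have h0 := MeasurePreserving.integral_comp' mp (fun z => F (e.symm z))
    rw [← h0]
    exact integral_congr_ae (Filter.Eventually.of_forall fun x =>
      (congrArg F (e.symm_apply_apply x)).symm)
  have hFi : Integrable (fun z => F (e.symm z)) (mu0.prod π') :=
    integrable_of_bdd _ (hFmeas.comp e.symm.measurable) _ (fun z => hFbdd _)
  rw [h1, integral_prod_symm _ hFi]
  have h2 : ∀ (y : Fin m → ℝ),
      (∫ r, F (e.symm (r, y)) ∂mu0) = 0 := by
    intro y
    have h3 : ∀ r : ℝ, F (e.symm (r, y)) = modHalf (r + t (j.insertNth 0 y)) * g (j.insertNth 0 y) := by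
      intro r
      have h4 : e.symm (r, y) = j.insertNth r y := by
        simp [he, MeasurableEquiv.piFinSuccAbove, Fin.insertNthEquiv]
      rw [h4, hF]
      simp only [Fin.insertNth_apply_same, htj, hgj]
    simp_rw [h3]
    rw [integral_mul_const]
    rw [show (∫ r, modHalf (r + t (j.insertNth 0 y)) ∂mu0) = 0 from integral_modHalf_eq_zero _]
    ring
  simp_rw [h2]
  simp

/-- Diagonal term. -/
lemma pi_diag {m : ℕ} (j : Fin (m + 1)) (t : (Fin (m + 1) → ℝ) → ℝ)
    (ht : Measurable t)
    (htj : ∀ (r : ℝ) y, t (j.insertNth r y) = t (j.insertNth 0 y)) :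
    ∫ x, (modHalf (x j + t x)) ^ 2 ∂(Measure.pi fun _ : Fin (m + 1) => mu0) = 1/12 := by
  set π : Measure (Fin (m + 1) → ℝ) := Measure.pi fun _ => mu0 with hπ
  set π' : Measure (Fin m → ℝ) := Measure.pi fun _ => mu0 with hπ'
  set F : (Fin (m + 1) → ℝ) → ℝ := fun x => (modHalf (x j + t x)) ^ 2 with hF
  have hFmeas : Measurable F :=
    (measurable_modHalf.comp ((measurable_pi_apply j).add ht)).pow_const 2
  have hFbdd : ∀ x, |F x| ≤ 1/4 := by
    intro x
    rw [hF, abs_of_nonneg (sq_nonneg _)]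
    nlinarith [abs_modHalf_le (x j + t x), sq_abs (modHalf (x j + t x)),
      abs_nonneg (modHalf (x j + t x))]
  set e := MeasurableEquiv.piFinSuccAbove (fun _ : Fin (m + 1) => ℝ) j with he
  have mp := measurePreserving_piFinSuccAbove (fun _ : Fin (m + 1) => mu0) j
  have h1 : ∫ x, F x ∂π = ∫ z, F (e.symm z) ∂(mu0.prod π') := by
    have h0 := MeasurePreserving.integral_comp' mp (fun z => F (e.symm z))
    rw [← h0]
    exact integral_congr_ae (Filter.Eventually.of_forall fun x =>
      (congrArg F (e.symm_apply_apply x)).symm)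
  have hFi : Integrable (fun z => F (e.symm z)) (mu0.prod π') :=
    integrable_of_bdd _ (hFmeas.comp e.symm.measurable) _ (fun z => hFbdd _)
  rw [h1, integral_prod_symm _ hFi]
  have h2 : ∀ (y : Fin m → ℝ),
      (∫ r, F (e.symm (r, y)) ∂mu0) = 1/12 := by
    intro y
    have h3 : ∀ r : ℝ, F (e.symm (r, y)) = (modHalf (r + t (j.insertNth 0 y))) ^ 2 := by
      intro r
      have h4 : e.symm (r, y) = j.insertNth r y := by
        simp [he, MeasurableEquiv.piFinSuccAbove, Fin.insertNthEquiv]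
      rw [h4, hF]
      simp only [Fin.insertNth_apply_same, htj]
    simp_rw [h3]
    exact integral_modHalf_sq _
  simp_rw [h2]
  simp

lemma map_eq_pi {n : ℕ} {Ω : Type*} [MeasurableSpace Ω] (P : Measure Ω) [IsProbabilityMeasure P]
    (s : Fin n → Ω → ℝ) (hmeas : ∀ i, Measurable (s i))
    (hindep : ProbabilityTheory.iIndepFun s P)
    (hunif : ∀ i, Measure.map (s i) P = volume.restrict (Set.Ico (-(1/2) : ℝ) (1/2))) :
    Measure.map (fun ω i => s i ω) P = Measure.pi fun _ : Fin n => mu0 := by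
  symm
  refine Measure.pi_eq fun t ht => ?_
  rw [Measure.map_apply (measurable_pi_lambda _ hmeas) (MeasurableSet.univ_pi ht)]
  have hpre : (fun ω i => s i ω) ⁻¹' Set.univ.pi t = ⋂ i ∈ Finset.univ, s i ⁻¹' t i := by
    ext ω; simp [Set.mem_univ_pi]
  rw [hpre, hindep.measure_inter_preimage_eq_mul Finset.univ (fun i _ => ht i)]
  refine Finset.prod_congr rfl fun i _ => ?_
  rw [mu0, ← hunif i, Measure.map_apply (hmeas i) (ht i)]

section Tri
variable {n : ℕ} (M : Matrix (Fin n) (Fin n) ℝ)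

lemma inv_diag_one (htri : M.BlockTriangular id) (hdiag : ∀ i, M i i = 1)
    (hunit : IsUnit M.det) (j : Fin n) : M⁻¹ j j = 1 := by
  haveI := M.invertibleOfIsUnitDet hunit
  have hinvtri : M⁻¹.BlockTriangular id := blockTriangular_inv_of_blockTriangular htri
  have h1 := congrArg (fun N => N j j) (nonsing_inv_mul M hunit)
  simp only [Matrix.mul_apply, Matrix.one_apply_eq] at h1
  rw [Finset.sum_eq_single j (fun l _ hl => ?_) (by simp)] at h1
  · rwa [hdiag j, mul_one] at h1
  · rcases lt_or_gt_of_ne hl with h | h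
    · rw [hinvtri (show (id l : Fin n) < id j from h), zero_mul]
    · rw [htri (show (id j : Fin n) < id l from h), mul_zero]
end Tri

lemma trace_eq_sum_eigenvalues {n : ℕ} {M : Matrix (Fin n) (Fin n) ℝ}
    (hM : M.IsHermitian) : M.trace = ∑ i, hM.eigenvalues i := by
  simpa using hM.trace_eq_sum_eigenvalues

lemma det_eq_prod_eigenvalues' {n : ℕ} {M : Matrix (Fin n) (Fin n) ℝ}
    (hM : M.IsHermitian) : M.det = ∏ i, hM.eigenvalues i := by
  rw [hM.det_eq_prod_eigenvalues]
  simp [RCLike.ofReal]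


end Aux

/-- Expected symbol energy of the LLL-aided Rounding-Off algorithm: with
`x̄ = H⁻¹ D T · Mod(T⁻¹ s)` and `s` i.i.d. uniform on `[-1/2,1/2)`,
`E[‖x̄‖²] = (1/12)·tr(Tᵀ D (HHᵀ)⁻¹ D T) ≥ (n/12)·det((HHᵀ)⁻¹)^(1/n)·(∏ dᵢ²)^(1/n)`. -/
theorem lll_rounding_off_energy {n : ℕ}
    (H : Matrix (Fin n) (Fin n) ℝ) (hH : IsUnit H.det)
    (d : Fin n → ℝ) (hd : ∀ i, 0 < d i)
    (T : Matrix (Fin n) (Fin n) ℤ)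
    (hTut : ∀ i j : Fin n, j < i → T i j = 0) (hTdiag : ∀ i, T i i = 1)
    {Ω : Type*} [MeasurableSpace Ω] (P : Measure Ω) [IsProbabilityMeasure P]
    (s : Fin n → Ω → ℝ) (hmeas : ∀ i, Measurable (s i))
    (hindep : ProbabilityTheory.iIndepFun s P)
    (hunif : ∀ i, Measure.map (s i) P = volume.restrict (Set.Ico (-(1/2) : ℝ) (1/2)))
    (xbar : Ω → Fin n → ℝ)
    (hxbar : ∀ ω, xbar ω
      = (H⁻¹ * Matrix.diagonal d * T.map (Int.cast : ℤ → ℝ)).mulVec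
          (fun i => modHalf (((T.map (Int.cast : ℤ → ℝ))⁻¹.mulVec (fun j => s j ω)) i))) :
    (∫ ω, (∑ i, (xbar ω i) ^ 2) ∂P
      = (1/12) * Matrix.trace
          ((T.map (Int.cast : ℤ → ℝ))ᵀ * Matrix.diagonal d * (H * Hᵀ)⁻¹
            * Matrix.diagonal d * T.map (Int.cast : ℤ → ℝ))) ∧
    ((n : ℝ)/12 * ((H * Hᵀ)⁻¹.det) ^ ((n : ℝ)⁻¹) * (∏ i, (d i) ^ 2) ^ ((n : ℝ)⁻¹)
      ≤ ∫ ω, (∑ i, (xbar ω i) ^ 2) ∂P) := by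
  classical
  -- trivial case n = 0
  rcases Nat.eq_zero_or_pos n with hn0 | hnpos
  · subst hn0
    constructor
    · simp [Matrix.trace]
    · simp
  obtain ⟨m, rfl⟩ : ∃ m, n = m + 1 := ⟨n - 1, (Nat.succ_pred_eq_of_pos hnpos).symm⟩
  set Tr := T.map (Int.cast : ℤ → ℝ) with hTrdef
  have hTri : Tr.BlockTriangular id := by
    intro i j hij
    simp only [hTrdef, Matrix.map_apply]
    exact_mod_cast congrArg (Int.cast : ℤ → ℝ) (hTut i j hij)
  have hTrdiag : ∀ i, Tr i i = 1 := fun i => by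
    simp [hTrdef, Matrix.map_apply, hTdiag i]
  have hdetTr : Tr.det = 1 := by
    rw [Matrix.det_of_upperTriangular hTri]
    simp [hTrdiag]
  have hunitTr : IsUnit Tr.det := by rw [hdetTr]; exact isUnit_one
  haveI := Tr.invertibleOfIsUnitDet hunitTr
  set B := Tr⁻¹ with hBdef
  have hBtri : B.BlockTriangular id := blockTriangular_inv_of_blockTriangular hTri
  have hBdiag : ∀ j, B j j = 1 := fun j => inv_diag_one Tr hTri hTrdiag hunitTr j
  set A := H⁻¹ * Matrix.diagonal d * Tr with hAdef
  set π : Measure (Fin (m + 1) → ℝ) := Measure.pi fun _ : Fin (m + 1) => mu0 with hπdef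
  set u : (Fin (m + 1) → ℝ) → Fin (m + 1) → ℝ := fun x i => modHalf (B.mulVec x i) with hudef
  set G : (Fin (m + 1) → ℝ) → ℝ := fun x => ∑ i, (A.mulVec (u x) i) ^ 2 with hGdef
  have hmvmeas : ∀ (M : Matrix (Fin (m + 1)) (Fin (m + 1)) ℝ) (i : Fin (m + 1)),
      Measurable fun x : Fin (m + 1) → ℝ => M.mulVec x i := by
    intro M i
    simp only [Matrix.mulVec, dotProduct]
    exact Finset.measurable_sum _ fun l _ => (measurable_pi_apply l).const_mul _
  have humeas : ∀ i, Measurable fun x => u x i := fun i =>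
    measurable_modHalf.comp (hmvmeas B i)
  have hGmeas : Measurable G := by
    apply Finset.measurable_sum
    intro i _
    apply Measurable.pow_const
    simp only [Matrix.mulVec, dotProduct]
    exact Finset.measurable_sum _ fun l _ => (humeas l).const_mul _
  -- Step 1: transfer to the product measure
  have hSmeas : Measurable fun ω (i : Fin (m + 1)) => s i ω := measurable_pi_lambda _ hmeas
  have step1 : ∫ ω, (∑ i, (xbar ω i) ^ 2) ∂P = ∫ x, G x ∂π := by
    have h1 : ∀ ω, (∑ i, (xbar ω i) ^ 2) = G (fun i => s i ω) := by
      intro ω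
      rw [hxbar ω]
    rw [integral_congr_ae (Filter.Eventually.of_forall h1),
      ← integral_map hSmeas.aemeasurable hGmeas.aestronglyMeasurable,
      map_eq_pi P s hmeas hindep hunif]
  -- the auxiliary shift functions
  set tf : Fin (m + 1) → (Fin (m + 1) → ℝ) → ℝ := fun j x => B.mulVec x j - x j with htfdef
  have htfmeas : ∀ j, Measurable (tf j) := fun j =>
    (hmvmeas B j).sub (measurable_pi_apply j)
  have hmv_ins : ∀ (p q : Fin (m + 1)) (r : ℝ) (y : Fin m → ℝ),
      B.mulVec (p.insertNth r y) q = B q p * r + ∑ i, B q (p.succAbove i) * y i := by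
    intro p q r y
    simp only [Matrix.mulVec, dotProduct]
    rw [Fin.sum_univ_succAbove _ p]
    simp [Fin.insertNth_apply_same, Fin.insertNth_apply_succAbove]
  have htf_ins : ∀ (j : Fin (m + 1)) (r : ℝ) (y : Fin m → ℝ),
      tf j (j.insertNth r y) = tf j (j.insertNth 0 y) := by
    intro j r y
    simp only [htfdef]
    rw [hmv_ins, hmv_ins, Fin.insertNth_apply_same, Fin.insertNth_apply_same, hBdiag j]
    ring
  have hpt : ∀ (j : Fin (m + 1)) (x : Fin (m + 1) → ℝ), x j + tf j x = B.mulVec x j := by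
    intro j x; simp only [htfdef]; ring
  -- the second moments
  have huu : ∀ j k : Fin (m + 1), ∫ x, u x j * u x k ∂π = if j = k then (1/12 : ℝ) else 0 := by
    have key : ∀ p q : Fin (m + 1), p < q → ∫ x, u x p * u x q ∂π = 0 := by
      intro p q hpq
      have hc := pi_cross p (tf p) (fun x => u x q) (htfmeas p) (humeas q) (1/2)
        (fun x => abs_modHalf_le _) (htf_ins p)
        (fun r y => by
          simp only [hudef]
          rw [hmv_ins, hmv_ins, hBtri (show (id p : Fin (m + 1)) < id q from hpq)]
          simp)
      rw [← hc]
      refine integral_congr_ae (Filter.Eventually.of_forall fun x => ?_)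
      simp only [hudef]
      rw [← hpt p x]
    intro j k
    rcases eq_or_ne j k with rfl | hne
    · rw [if_pos rfl, ← pi_diag j (tf j) (htfmeas j) (htf_ins j)]
      refine integral_congr_ae (Filter.Eventually.of_forall fun x => ?_)
      simp only [hudef]
      rw [sq, ← hpt j x]
    · rw [if_neg hne]
      rcases hne.lt_or_gt with h | h
      · exact key j k h
      · rw [show (fun x => u x j * u x k) = fun x => u x k * u x j from
          funext fun x => mul_comm _ _]
        exact key k j h
  -- integrability of the cross terms
  have hintuu : ∀ (c : ℝ) (j k : Fin (m + 1)), Integrable (fun x => c * (u x j * u x k)) π := by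
    intro c j k
    refine integrable_of_bdd π (((humeas j).mul (humeas k)).const_mul c) (|c| * (1/4)) ?_
    intro x
    rw [abs_mul, abs_mul]
    gcongr
    calc |u x j| * |u x k| ≤ (1/2) * (1/2) :=
      mul_le_mul (abs_modHalf_le _) (abs_modHalf_le _) (abs_nonneg _) (by norm_num)
    _ = 1/4 := by norm_num
  -- Step 2: compute the integral
  have step2 : ∫ x, G x ∂π = 1/12 * ∑ i, ∑ j, (A i j) ^ 2 := by
    have hGx : ∀ x, G x = ∑ i, ∑ j, ∑ k, (A i j * A i k) * (u x j * u x k) := by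
      intro x
      simp only [hGdef]
      refine Finset.sum_congr rfl fun i _ => ?_
      simp only [Matrix.mulVec, dotProduct]
      rw [sq, Finset.sum_mul_sum]
      exact Finset.sum_congr rfl fun j _ => Finset.sum_congr rfl fun k _ => by ring
    simp_rw [hGx]
    rw [integral_finset_sum _ fun i _ => integrable_finset_sum _ fun j _ =>
      integrable_finset_sum _ fun k _ => hintuu _ _ _]
    have : ∀ i, (∫ x, ∑ j, ∑ k, (A i j * A i k) * (u x j * u x k) ∂π)
        = ∑ j, (A i j) ^ 2 * (1/12) := by
      intro i
      rw [integral_finset_sum _ fun j _ => integrable_finset_sum _ fun k _ => hintuu _ _ _]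
      refine Finset.sum_congr rfl fun j _ => ?_
      rw [integral_finset_sum _ fun k _ => hintuu _ _ _]
      have : ∀ k, (∫ x, (A i j * A i k) * (u x j * u x k) ∂π)
          = if j = k then (A i j * A i k) * (1/12) else 0 := by
        intro k
        rw [integral_const_mul, huu j k]
        split <;> simp
      simp_rw [this]
      rw [Finset.sum_ite_eq Finset.univ j (fun k => (A i j * A i k) * (1/12))]
      simp [sq]
    simp_rw [this]
    rw [Finset.mul_sum]
    refine Finset.sum_congr rfl fun i _ => ?_
    rw [Finset.mul_sum]
    exact Finset.sum_congr rfl fun j _ => by ring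
  -- Step 3: the trace identity
  have hmatid : Trᵀ * Matrix.diagonal d * (H * Hᵀ)⁻¹ * Matrix.diagonal d * Tr = Aᵀ * A := by
    rw [Matrix.mul_inv_rev, ← Matrix.transpose_nonsing_inv]
    simp only [hAdef, Matrix.transpose_mul, Matrix.diagonal_transpose]
    simp only [Matrix.mul_assoc]
  have htrace_sum : Matrix.trace (Aᵀ * A) = ∑ i, ∑ j, (A i j) ^ 2 := by
    simp only [Matrix.trace, Matrix.diag, Matrix.mul_apply, Matrix.transpose_apply, sq]
    rw [Finset.sum_comm]
  have part1 : ∫ ω, (∑ i, (xbar ω i) ^ 2) ∂P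
      = 1/12 * Matrix.trace (Trᵀ * Matrix.diagonal d * (H * Hᵀ)⁻¹ * Matrix.diagonal d * Tr) := by
    rw [step1, step2, hmatid, htrace_sum]
  refine ⟨part1, ?_⟩
  -- Part 2: AM-GM
  set M := Aᵀ * A with hMdef
  have psd : M.PosSemidef := by
    have h := Matrix.posSemidef_conjTranspose_mul_self A
    rwa [Matrix.conjTranspose_eq_transpose_of_trivial] at h
  have hher : M.IsHermitian := psd.1
  set ev := hher.eigenvalues with hev
  have htrM : M.trace = ∑ i, ev i := trace_eq_sum_eigenvalues hher
  have hdetM : M.det = ∏ i, ev i := det_eq_prod_eigenvalues' hher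
  have hnn : ∀ i, 0 ≤ ev i := fun i => psd.eigenvalues_nonneg i
  have hdetA : A.det = (H.det)⁻¹ * ∏ i, d i := by
    simp [hAdef, Matrix.det_mul, Matrix.det_diagonal, hdetTr, Matrix.det_nonsing_inv,
      Ring.inverse_eq_inv']
  have hdetHHT : ((H * Hᵀ)⁻¹).det = ((H.det)⁻¹) ^ 2 := by
    rw [Matrix.det_nonsing_inv, Matrix.det_mul, Matrix.det_transpose, Ring.inverse_eq_inv',
      mul_inv, sq]
  have hdetMval : M.det = ((H * Hᵀ)⁻¹).det * ∏ i, (d i) ^ 2 := by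
    rw [hMdef, Matrix.det_mul, Matrix.det_transpose, hdetA, hdetHHT, Finset.prod_pow]
    ring
  have hdetHHTnn : 0 ≤ ((H * Hᵀ)⁻¹).det := by rw [hdetHHT]; positivity
  have hprodnn : 0 ≤ ∏ i, (d i) ^ 2 := Finset.prod_nonneg fun i _ => sq_nonneg _
  push_cast
  calc ((m : ℝ) + 1)/12 * ((H * Hᵀ)⁻¹.det) ^ (((m : ℝ) + 1)⁻¹) * (∏ i, (d i) ^ 2) ^ (((m : ℝ) + 1)⁻¹)
      = ((m : ℝ) + 1)/12 * (((H * Hᵀ)⁻¹.det) * ∏ i, (d i) ^ 2) ^ (((m : ℝ) + 1)⁻¹) := by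
        rw [Real.mul_rpow hdetHHTnn hprodnn]; ring
    _ = ((m : ℝ) + 1)/12 * (∏ i, ev i) ^ (((m : ℝ) + 1)⁻¹) := by rw [← hdetMval, hdetM]
    _ = ((m : ℝ) + 1)/12 * ∏ i, (ev i) ^ (((m : ℝ) + 1)⁻¹) := by
        rw [Real.finset_prod_rpow _ _ (fun i _ => hnn i)]
    _ ≤ ((m : ℝ) + 1)/12 * ∑ i, (((m : ℝ) + 1)⁻¹) * ev i := by
        refine mul_le_mul_of_nonneg_left ?_ (by positivity)
        refine Real.geom_mean_le_arith_mean_weighted Finset.univ _ _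
          (fun i _ => by positivity) ?_ (fun i _ => hnn i)
        rw [Finset.sum_const, Finset.card_univ, Fintype.card_fin, nsmul_eq_mul]
        push_cast
        field_simp
    _ = 1/12 * ∑ i, ev i := by
        rw [← Finset.mul_sum]
        have hne : ((m : ℝ) + 1) ≠ 0 := by positivity
        field_simp
    _ = 1/12 * M.trace := by rw [htrM]
    _ = ∫ ω, (∑ i, (xbar ω i) ^ 2) ∂P := by rw [part1, hmatid]
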